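/- Let A and B be positive semilattice forest automata whose cores satisfy p ≤ a·p and, for all core states p, q and letter a, if p ≤ q ≤ a·p then a·p = a·q. Then the same implication holds for core states of any Moore product A ×_α B: if (p,p') ≤ (q,q') ≤ a·(p,p') with (p,p'),(q,q') in the core of the product, then a·(p,p') = a·(q,q'). -/
import Mathlib


mutual
/-- Trees over alphabet `σ`. -/
inductive FTree (σ : Type) where
  | node : σ → FForest σ → FTree σ
/-- Forests over alphabet `σ`: ordered tuples of trees. -/
inductive FForest (σ : Type) where
  | nil : FForest σ
  | cons : FTree σ → FForest σ → FForest σ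
end

structure FA (σ Q : Type) where
  add : Q → Q → Q
  zero : Q
  act : σ → Q → Q

mutual
/-- Evaluation of a tree in a forest automaton. -/
def evalT {σ Q : Type} (A : FA σ Q) : FTree σ → Q
  | .node a s => A.act a (evalF A s)
/-- Evaluation of a forest in a forest automaton. -/
def evalF {σ Q : Type} (A : FA σ Q) : FForest σ → Q
  | .nil => A.zero
  | .cons t s => A.add (evalT A t) (evalF A s)
end

def moore {σ Δ Q₁ Q₂ : Type} (A : FA σ Q₁) (B : FA Δ Q₂)
    (α : σ → Q₁ → Δ) : FA σ (Q₁ × Q₂) where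
  add p q := (A.add p.1 q.1, B.add p.2 q.2)
  zero := (A.zero, B.zero)
  act a pq := (A.act a pq.1, B.act (α a (A.act a pq.1)) pq.2)

def Positive {σ Q : Type} (A : FA σ Q) : Prop :=
  ∀ s : FForest σ, evalF A s = A.zero ↔ s = FForest.nil

def core {σ Q : Type} (A : FA σ Q) : Set Q :=
  {q | ∃ s : FForest σ, s ≠ FForest.nil ∧ evalF A s = q}


theorem moore_add {σ Δ Q₁ Q₂ : Type} (A : FA σ Q₁) (B : FA Δ Q₂) (α : σ → Q₁ → Δ)
    (p q : Q₁ × Q₂) :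
    (moore A B α).add p q = (A.add p.1 q.1, B.add p.2 q.2) := rfl
theorem moore_zero {σ Δ Q₁ Q₂ : Type} (A : FA σ Q₁) (B : FA Δ Q₂) (α : σ → Q₁ → Δ) :
    (moore A B α).zero = (A.zero, B.zero) := rfl
theorem moore_act {σ Δ Q₁ Q₂ : Type} (A : FA σ Q₁) (B : FA Δ Q₂) (α : σ → Q₁ → Δ)
    (a : σ) (pq : Q₁ × Q₂) :
    (moore A B α).act a pq = (A.act a pq.1, B.act (α a (A.act a pq.1)) pq.2) := rfl

mutual
def trT {σ Δ Q₁ Q₂ : Type} (A : FA σ Q₁) (B : FA Δ Q₂) (α : σ → Q₁ → Δ) :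
    FTree σ → FTree Δ
  | .node a s => .node (α a (A.act a (evalF A s))) (trF A B α s)
def trF {σ Δ Q₁ Q₂ : Type} (A : FA σ Q₁) (B : FA Δ Q₂) (α : σ → Q₁ → Δ) :
    FForest σ → FForest Δ
  | .nil => .nil
  | .cons t s => .cons (trT A B α t) (trF A B α s)
end

mutual
theorem proj1T {σ Δ Q₁ Q₂ : Type} (A : FA σ Q₁) (B : FA Δ Q₂) (α : σ → Q₁ → Δ) :
    ∀ t : FTree σ, (evalT (moore A B α) t).1 = evalT A t
  | .node a s => by simp [evalT, moore_act, proj1F A B α s]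
theorem proj1F {σ Δ Q₁ Q₂ : Type} (A : FA σ Q₁) (B : FA Δ Q₂) (α : σ → Q₁ → Δ) :
    ∀ s : FForest σ, (evalF (moore A B α) s).1 = evalF A s
  | .nil => by simp [evalF, moore_zero]
  | .cons t s => by simp [evalF, moore_add, proj1T A B α t, proj1F A B α s]
end

mutual
theorem proj2T {σ Δ Q₁ Q₂ : Type} (A : FA σ Q₁) (B : FA Δ Q₂) (α : σ → Q₁ → Δ) :
    ∀ t : FTree σ, (evalT (moore A B α) t).2 = evalT B (trT A B α t)
  | .node a s => by
      simp [evalT, moore_act, trT, proj2F A B α s, proj1F A B α s]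
theorem proj2F {σ Δ Q₁ Q₂ : Type} (A : FA σ Q₁) (B : FA Δ Q₂) (α : σ → Q₁ → Δ) :
    ∀ s : FForest σ, (evalF (moore A B α) s).2 = evalF B (trF A B α s)
  | .nil => by simp [evalF, moore_zero, trF]
  | .cons t s => by simp [evalF, moore_add, trF, proj2T A B α t, proj2F A B α s]
end

theorem core_moore_1 {σ Δ Q₁ Q₂ : Type} {A : FA σ Q₁} {B : FA Δ Q₂} {α : σ → Q₁ → Δ}
    {pq : Q₁ × Q₂} (h : pq ∈ core (moore A B α)) : pq.1 ∈ core A := by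
  obtain ⟨s, hs, he⟩ := h
  exact ⟨s, hs, by rw [← he, proj1F]⟩

theorem core_moore_2 {σ Δ Q₁ Q₂ : Type} {A : FA σ Q₁} {B : FA Δ Q₂} {α : σ → Q₁ → Δ}
    {pq : Q₁ × Q₂} (h : pq ∈ core (moore A B α)) : pq.2 ∈ core B := by
  obtain ⟨s, hs, he⟩ := h
  refine ⟨trF A B α s, ?_, by rw [← he, proj2F]⟩
  cases s with
  | nil => exact absurd rfl hs
  | cons t s => simp [trF]

/-- The core condition `p ≤ q ≤ a·p → a·p = a·q` (where
`x ≤ y` means `x = x + y`) is preserved by Moore products of positive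
semilattice forest automata whose cores also satisfy `p ≤ a·p`. -/
theorem stmt15 {σ Δ Q₁ Q₂ : Type} (A : FA σ Q₁) (B : FA Δ Q₂)
    (α : σ → Q₁ → Δ)
    (hA_pos : Positive A) (hB_pos : Positive B)
    (hA_comm : ∀ x y, A.add x y = A.add y x)
    (hA_idem : ∀ x, A.add x x = x)
    (hB_comm : ∀ x y, B.add x y = B.add y x)
    (hB_idem : ∀ x, B.add x x = x)
    (hA_incr : ∀ p ∈ core A, ∀ a : σ, p = A.add p (A.act a p))
    (hB_incr : ∀ q ∈ core B, ∀ b : Δ, q = B.add q (B.act b q))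
    (hA_imp : ∀ p ∈ core A, ∀ q ∈ core A, ∀ a : σ,
      p = A.add p q → q = A.add q (A.act a p) → A.act a p = A.act a q)
    (hB_imp : ∀ p ∈ core B, ∀ q ∈ core B, ∀ b : Δ,
      p = B.add p q → q = B.add q (B.act b p) → B.act b p = B.act b q) :
    ∀ pp' ∈ core (moore A B α), ∀ qq' ∈ core (moore A B α), ∀ a : σ,
      pp' = (moore A B α).add pp' qq' →
      qq' = (moore A B α).add qq' ((moore A B α).act a pp') →
      (moore A B α).act a pp' = (moore A B α).act a qq' := by
  intro pp hpp qq hqq a h1 h2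
  obtain ⟨p, p'⟩ := pp
  obtain ⟨q, q'⟩ := qq
  simp only [moore_add, moore_act, Prod.mk.injEq] at h1 h2
  have hAeq : A.act a p = A.act a q :=
    hA_imp p (core_moore_1 hpp) q (core_moore_1 hqq) a h1.1 h2.1
  have hBeq : B.act (α a (A.act a p)) p' = B.act (α a (A.act a p)) q' :=
    hB_imp p' (core_moore_2 hpp) q' (core_moore_2 hqq) _ h1.2 h2.2
  rw [hAeq] at hBeq
  rw [moore_act, moore_act]
  simp [hAeq, hBeq]
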